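/- arXiv:math/0005223 — 5 statements merged into one kernel-verified Lean document; each statement's English description precedes it below -/
import Mathlib

section
/- Let U : ℂ → ℝ be a real-valued function, let γ ∈ ℂ and μ ∈ ℂ. Suppose ψ = (ψ₁, ψ₂) : ℂ → ℂ² is continuously real-differentiable, satisfies the Dirac equation ∂ψ₂ + U·ψ₁ = 0 and −∂̄ψ₁ + U·ψ₂ = 0 on all of ℂ, and satisfies the Floquet condition ψ(z + γ) = μ·ψ(z) for all z ∈ ℂ. Then the pair φ = (φ₁, φ₂) with φ₁(z) = conj(ψ₂(z)) and φ₂(z) = −conj(ψ₁(z)) also satisfies the Dirac equation with the same potential U and satisfies φ(z + γ) = conj(μ)·φ(z) for all z ∈ ℂ. -/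
/-! Complex conjugation interchanges ∂ and ∂̄ and fixes the real potential U, so conjugating the two
Dirac equations for ψ and swapping the components gives the Dirac equations for φ; the Floquet
multiplier is conjugated along with ψ. -/

open Complex

/-- Wirtinger derivative ∂f = ½(∂f/∂x − i ∂f/∂y). -/
noncomputable def wd (f : ℂ → ℂ) (z : ℂ) : ℂ :=
  (1 / 2 : ℂ) * (fderiv ℝ f z 1 - Complex.I * fderiv ℝ f z Complex.I)

/-- Wirtinger derivative ∂̄f = ½(∂f/∂x + i ∂f/∂y). -/
noncomputable def wdb (f : ℂ → ℂ) (z : ℂ) : ℂ :=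
  (1 / 2 : ℂ) * (fderiv ℝ f z 1 + Complex.I * fderiv ℝ f z Complex.I)

open ComplexConjugate

theorem fderiv_conj_apply {E : Type*} [NormedAddCommGroup E] [NormedSpace ℝ E]
    (f : E → ℂ) (x v : E) :
    fderiv ℝ (fun y => conj (f y)) x v = conj (fderiv ℝ f x v) :=
  congrArg (· v) (fderiv_star (𝕜 := ℝ) (f := f) (x := x))

theorem wd_conj (f : ℂ → ℂ) (z : ℂ) :
    wd (fun w => conj (f w)) z = conj (wdb f z) := by
  simp only [wd, wdb, fderiv_conj_apply, map_mul, map_add, conj_I, map_div₀, map_one, map_ofNat]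
  ring

theorem wdb_conj (f : ℂ → ℂ) (z : ℂ) :
    wdb (fun w => conj (f w)) z = conj (wd f z) := by
  simp only [wd, wdb, fderiv_conj_apply, map_mul, map_sub, conj_I, map_div₀, map_one, map_ofNat]
  ring

theorem wd_neg (f : ℂ → ℂ) (z : ℂ) : wd (fun w => -f w) z = -wd f z := by
  simp only [wd, fderiv_fun_neg, neg_apply]
  ring

theorem stmt0_general (U : ℂ → ℝ) (γ μ : ℂ) (ψ₁ ψ₂ : ℂ → ℂ)
    (hd1 : ∀ z, wd ψ₂ z + (U z : ℂ) * ψ₁ z = 0)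
    (hd2 : ∀ z, -wdb ψ₁ z + (U z : ℂ) * ψ₂ z = 0)
    (hf1 : ∀ z, ψ₁ (z + γ) = μ * ψ₁ z)
    (hf2 : ∀ z, ψ₂ (z + γ) = μ * ψ₂ z) :
    (∀ z, wd (fun w => -(starRingEnd ℂ) (ψ₁ w)) z
        + (U z : ℂ) * (starRingEnd ℂ) (ψ₂ z) = 0) ∧
    (∀ z, -wdb (fun w => (starRingEnd ℂ) (ψ₂ w)) z
        + (U z : ℂ) * (-(starRingEnd ℂ) (ψ₁ z)) = 0) ∧
    (∀ z, (starRingEnd ℂ) (ψ₂ (z + γ)) = (starRingEnd ℂ) μ * (starRingEnd ℂ) (ψ₂ z)) ∧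
    (∀ z, -(starRingEnd ℂ) (ψ₁ (z + γ)) = (starRingEnd ℂ) μ * (-(starRingEnd ℂ) (ψ₁ z))) := by
  refine ⟨fun z => ?_, fun z => ?_, fun z => by rw [hf2 z, map_mul],
    fun z => by rw [hf1 z, map_mul, mul_neg]⟩
  · have h := congrArg conj (hd2 z)
    simp only [map_add, map_neg, map_mul, conj_ofReal, map_zero] at h
    rw [wd_neg, wd_conj]
    linear_combination h
  · have h := congrArg conj (hd1 z)
    simp only [map_add, map_mul, conj_ofReal, map_zero] at h
    rw [wdb_conj]
    linear_combination -h

/-- The antiholomorphic involution of the Floquet spectrum of a Dirac operator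
with real-valued potential: if ψ = (ψ₁, ψ₂) solves 𝒟ψ = 0 with Floquet
multiplier μ for the period γ, then φ = (conj ψ₂, −conj ψ₁) solves 𝒟φ = 0 with
multiplier conj μ. -/
theorem stmt0 (U : ℂ → ℝ) (γ μ : ℂ) (ψ₁ ψ₂ : ℂ → ℂ)
    (hψ₁ : ContDiff ℝ 1 ψ₁) (hψ₂ : ContDiff ℝ 1 ψ₂)
    (hd1 : ∀ z, wd ψ₂ z + (U z : ℂ) * ψ₁ z = 0)
    (hd2 : ∀ z, -wdb ψ₁ z + (U z : ℂ) * ψ₂ z = 0)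
    (hf1 : ∀ z, ψ₁ (z + γ) = μ * ψ₁ z)
    (hf2 : ∀ z, ψ₂ (z + γ) = μ * ψ₂ z) :
    (∀ z, wd (fun w => -(starRingEnd ℂ) (ψ₁ w)) z
        + (U z : ℂ) * (starRingEnd ℂ) (ψ₂ z) = 0) ∧
    (∀ z, -wdb (fun w => (starRingEnd ℂ) (ψ₂ w)) z
        + (U z : ℂ) * (-(starRingEnd ℂ) (ψ₁ z)) = 0) ∧
    (∀ z, (starRingEnd ℂ) (ψ₂ (z + γ)) = (starRingEnd ℂ) μ * (starRingEnd ℂ) (ψ₂ z)) ∧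
    (∀ z, -(starRingEnd ℂ) (ψ₁ (z + γ)) = (starRingEnd ℂ) μ * (-(starRingEnd ℂ) (ψ₁ z))) :=
  stmt0_general U γ μ ψ₁ ψ₂ hd1 hd2 hf1 hf2
end

section
/- Let U : ℝ → ℂ be continuously differentiable, let λ ∈ ℂ, and let η₁, η₂ : ℝ → ℂ be twice continuously differentiable functions satisfying η₁′ + 2iU·η₁ = −iλ·η₂ and η₂′ − 2iU·η₂ = −iλ·η₁ on ℝ. Then f = η₂ satisfies the Schrödinger equation −f″ + (2iU′ − 4U²)·f = λ²·f on ℝ. -/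
/-! Solving the second equation for η₂′ and differentiating it once more expresses η₂″
through U′, η₁′ and η₂′; eliminating η₁′ and η₂′ with the system, the terms in η₁ cancel
and only λ²η₂ survives. -/

open Complex

theorem hasDerivAt_deriv_of_deriv_sub_mul_eq {U η₁ η₂ : ℝ → ℂ} {lam : ℂ}
    (hU : Differentiable ℝ U) (h₁ : Differentiable ℝ η₁) (h₂ : Differentiable ℝ η₂)
    (e₂ : ∀ x, deriv η₂ x - 2 * I * U x * η₂ x = -I * lam * η₁ x) (x : ℝ) :
    HasDerivAt (deriv η₂)
      (2 * I * (deriv U x * η₂ x + U x * deriv η₂ x) - I * lam * deriv η₁ x) x := by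
  have hη₂' : deriv η₂ = fun y => 2 * I * (U y * η₂ y) - I * lam * η₁ y :=
    funext fun y => by linear_combination e₂ y
  have hderiv : HasDerivAt (fun y => 2 * I * (U y * η₂ y) - I * lam * η₁ y)
      (2 * I * (deriv U x * η₂ x + U x * deriv η₂ x) - I * lam * deriv η₁ x) x :=
    (((hU x).hasDerivAt.mul (h₂ x).hasDerivAt).const_mul (2 * I)).sub
      ((h₁ x).hasDerivAt.const_mul (I * lam))
  rwa [← hη₂'] at hderiv

/-- The Miura transformation: if η₁, η₂ solve the first-order system
η₁′ + 2iU·η₁ = −iλ·η₂, η₂′ − 2iU·η₂ = −iλ·η₁ coming from the Zakharov–Shabat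
system, then f = η₂ solves the Schrödinger equation
−f″ + (2iU′ − 4U²)f = λ²f. -/
theorem stmt4 (U : ℝ → ℂ) (hU : ContDiff ℝ 1 U) (lam : ℂ)
    (η₁ η₂ : ℝ → ℂ) (h1 : ContDiff ℝ 2 η₁) (h2 : ContDiff ℝ 2 η₂)
    (e1 : ∀ x, deriv η₁ x + 2 * Complex.I * U x * η₁ x = -Complex.I * lam * η₂ x)
    (e2 : ∀ x, deriv η₂ x - 2 * Complex.I * U x * η₂ x = -Complex.I * lam * η₁ x) :
    ∀ x, -deriv (deriv η₂) x + (2 * Complex.I * deriv U x - 4 * U x ^ 2) * η₂ x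
      = lam ^ 2 * η₂ x := by
  intro x
  rw [(hasDerivAt_deriv_of_deriv_sub_mul_eq (hU.differentiable one_ne_zero)
    (h1.differentiable two_ne_zero) (h2.differentiable two_ne_zero) e2 x).deriv]
  linear_combination I * lam * e1 x - 2 * I * U x * e2 x - (lam ^ 2 + 4 * U x ^ 2) * η₂ x * I_sq
end

section
/- Let α : ℂ → ℝ be continuously real-differentiable, set u = 2α, and let λ ∈ ℂ with λ ≠ 0. Let φ = (φ₁, φ₂) : ℂ → ℂ² be continuously real-differentiable. Then φ satisfies the system ∂φ₁ = ½(−∂u·φ₁ − λ·φ₂), ∂φ₂ = ½(−λ·φ₁ + ∂u·φ₂), ∂̄φ₁ = (1/(2λ))·e^{−u}·φ₂, ∂̄φ₂ = (1/(2λ))·e^{u}·φ₁ if and only if ψ = (ψ₁, ψ₂) with ψ₁ = λ·φ₂ and ψ₂ = e^{α}·φ₁ satisfies the system ∂ψ₁ = ∂α·ψ₁ − (λ²/2)·e^{−α}·ψ₂, ∂ψ₂ = −½·e^{α}·ψ₁, ∂̄ψ₁ = ½·e^{α}·ψ₂, ∂̄ψ₂ = (1/(2λ²))·e^{−α}·ψ₁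 + ∂̄α·ψ₂. -/
open Complex

/-!
The two systems correspond equation by equation: the ∂- and ∂̄-equations for
ψ₁ = λφ₂ are λ times those for φ₂, and by the Leibniz rule the equations for ψ₂ = e^α φ₁ are
e^α times those for φ₁; since λ ≠ 0 and e^α ≠ 0 each pair is equivalent.
-/

section Wirtinger

variable {f g : ℂ → ℂ} {z : ℂ}

lemma fderiv_const_mul_apply (c v : ℂ) :
    fderiv ℝ (fun w => c * f w) z v = c * fderiv ℝ f z v := by
  rw [show (fun w => c * f w) = c • f from rfl, fderiv_const_smul_field]
  rfl

lemma wd_const_mul (c : ℂ) : wd (fun w => c * f w) z = c * wd f z := by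
  simp only [wd, fderiv_const_mul_apply]
  ring

lemma wdb_const_mul (c : ℂ) : wdb (fun w => c * f w) z = c * wdb f z := by
  simp only [wdb, fderiv_const_mul_apply]
  ring

lemma wd_mul (hf : DifferentiableAt ℝ f z) (hg : DifferentiableAt ℝ g z) :
    wd (fun w => f w * g w) z = wd f z * g z + f z * wd g z := by
  simp only [wd, fderiv_fun_mul hf hg, add_apply, smul_apply, smul_eq_mul]
  ring

lemma wdb_mul (hf : DifferentiableAt ℝ f z) (hg : DifferentiableAt ℝ g z) :
    wdb (fun w => f w * g w) z = wdb f z * g z + f z * wdb g z := by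
  simp only [wdb, fderiv_fun_mul hf hg, add_apply, smul_apply, smul_eq_mul]
  ring

lemma fderiv_cexp_apply (hf : DifferentiableAt ℝ f z) (v : ℂ) :
    fderiv ℝ (fun w => cexp (f w)) z v = cexp (f z) * fderiv ℝ f z v :=
  congrArg (· v) hf.hasFDerivAt.cexp.fderiv

lemma wd_cexp (hf : DifferentiableAt ℝ f z) :
    wd (fun w => cexp (f w)) z = cexp (f z) * wd f z := by
  simp only [wd, fderiv_cexp_apply hf]
  ring

lemma wdb_cexp (hf : DifferentiableAt ℝ f z) :
    wdb (fun w => cexp (f w)) z = cexp (f z) * wdb f z := by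
  simp only [wdb, fderiv_cexp_apply hf]
  ring

lemma wd_cexp_mul (hf : DifferentiableAt ℝ f z) (hg : DifferentiableAt ℝ g z) :
    wd (fun w => cexp (f w) * g w) z = cexp (f z) * (wd f z * g z + wd g z) := by
  rw [wd_mul hf.cexp hg, wd_cexp hf]
  ring

lemma wdb_cexp_mul (hf : DifferentiableAt ℝ f z) (hg : DifferentiableAt ℝ g z) :
    wdb (fun w => cexp (f w) * g w) z = cexp (f z) * (wdb f z * g z + wdb g z) := by
  rw [wdb_mul hf.cexp hg, wdb_cexp hf]
  ring

end Wirtinger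

section Gauge

variable {a φ₁ φ₂ : ℂ → ℂ} {lam z : ℂ}

lemma wd_snd_iff_wd_const_mul (hlam : lam ≠ 0) :
    wd φ₂ z = (1 / 2) * (-lam * φ₁ z + wd (fun w => 2 * a w) z * φ₂ z) ↔
      wd (fun w => lam * φ₂ w) z
        = wd a z * (lam * φ₂ z) - (lam ^ 2 / 2) * cexp (-a z) * (cexp (a z) * φ₁ z) := by
  have h : wd a z * (lam * φ₂ z) - (lam ^ 2 / 2) * cexp (-a z) * (cexp (a z) * φ₁ z)
      = lam * ((1 / 2) * (-lam * φ₁ z + 2 * wd a z * φ₂ z)) := by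
    rw [exp_neg]
    field_simp
    ring
  rw [wd_const_mul, wd_const_mul, h, mul_right_inj' hlam]

lemma wd_fst_iff_wd_cexp_mul (ha : DifferentiableAt ℝ a z) (h₁ : DifferentiableAt ℝ φ₁ z) :
    wd φ₁ z = (1 / 2) * (-(wd (fun w => 2 * a w) z) * φ₁ z - lam * φ₂ z) ↔
      wd (fun w => cexp (a w) * φ₁ w) z = -(1 / 2) * cexp (a z) * (lam * φ₂ z) := by
  have h : -(1 / 2) * cexp (a z) * (lam * φ₂ z)
      = cexp (a z) * (wd a z * φ₁ z + (1 / 2) * (-(2 * wd a z) * φ₁ z - lam * φ₂ z)) := by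
    ring
  rw [wd_cexp_mul ha h₁, wd_const_mul, h, mul_right_inj' (exp_ne_zero _), add_right_inj]

lemma wdb_snd_iff_wdb_const_mul (hlam : lam ≠ 0) :
    wdb φ₂ z = (1 / (2 * lam)) * cexp (2 * a z) * φ₁ z ↔
      wdb (fun w => lam * φ₂ w) z = (1 / 2) * cexp (a z) * (cexp (a z) * φ₁ z) := by
  have h : (1 / 2) * cexp (a z) * (cexp (a z) * φ₁ z)
      = lam * ((1 / (2 * lam)) * cexp (2 * a z) * φ₁ z) := by
    rw [two_mul (a z), exp_add]
    field_simp
  rw [wdb_const_mul, h, mul_right_inj' hlam]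

lemma wdb_fst_iff_wdb_cexp_mul (hlam : lam ≠ 0) (ha : DifferentiableAt ℝ a z)
    (h₁ : DifferentiableAt ℝ φ₁ z) :
    wdb φ₁ z = (1 / (2 * lam)) * cexp (-(2 * a z)) * φ₂ z ↔
      wdb (fun w => cexp (a w) * φ₁ w) z
        = (1 / (2 * lam ^ 2)) * cexp (-a z) * (lam * φ₂ z) + wdb a z * (cexp (a z) * φ₁ z) := by
  have h : (1 / (2 * lam ^ 2)) * cexp (-a z) * (lam * φ₂ z) + wdb a z * (cexp (a z) * φ₁ z)
      = cexp (a z) * (wdb a z * φ₁ z + (1 / (2 * lam)) * cexp (-(2 * a z)) * φ₂ z) := by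
    rw [exp_neg, exp_neg, two_mul (a z), exp_add]
    field_simp
    ring
  rw [wdb_cexp_mul ha h₁, h, mul_right_inj' (exp_ne_zero _), add_right_inj]

end Gauge

theorem stmt10_general (α : ℂ → ℝ) (hα : ContDiff ℝ 1 α) (lam : ℂ) (hlam : lam ≠ 0)
    (φ₁ φ₂ : ℂ → ℂ) (h1 : ContDiff ℝ 1 φ₁) :
    ((∀ z, wd φ₁ z = (1 / 2) *
        (-(wd (fun w => ((2 * α w : ℝ) : ℂ)) z) * φ₁ z - lam * φ₂ z)) ∧
     (∀ z, wd φ₂ z = (1 / 2) *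
        (-lam * φ₁ z + wd (fun w => ((2 * α w : ℝ) : ℂ)) z * φ₂ z)) ∧
     (∀ z, wdb φ₁ z = (1 / (2 * lam)) * Complex.exp (-((2 * α z : ℝ) : ℂ)) * φ₂ z) ∧
     (∀ z, wdb φ₂ z = (1 / (2 * lam)) * Complex.exp ((2 * α z : ℝ) : ℂ) * φ₁ z))
    ↔
    ((∀ z, wd (fun w => lam * φ₂ w) z
        = wd (fun w => ((α w : ℝ) : ℂ)) z * (lam * φ₂ z)
          - (lam ^ 2 / 2) * Complex.exp (-((α z : ℝ) : ℂ)) *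
            (Complex.exp ((α z : ℝ) : ℂ) * φ₁ z)) ∧
     (∀ z, wd (fun w => Complex.exp ((α w : ℝ) : ℂ) * φ₁ w) z
        = -(1 / 2) * Complex.exp ((α z : ℝ) : ℂ) * (lam * φ₂ z)) ∧
     (∀ z, wdb (fun w => lam * φ₂ w) z
        = (1 / 2) * Complex.exp ((α z : ℝ) : ℂ) * (Complex.exp ((α z : ℝ) : ℂ) * φ₁ z)) ∧
     (∀ z, wdb (fun w => Complex.exp ((α w : ℝ) : ℂ) * φ₁ w) z
        = (1 / (2 * lam ^ 2)) * Complex.exp (-((α z : ℝ) : ℂ)) * (lam * φ₂ z)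
          + wdb (fun w => ((α w : ℝ) : ℂ)) z * (Complex.exp ((α z : ℝ) : ℂ) * φ₁ z))) := by
  have ha : Differentiable ℝ (fun w => ((α w : ℝ) : ℂ)) :=
    ofRealCLM.differentiable.comp (hα.differentiable one_ne_zero)
  have hφ₁ : Differentiable ℝ φ₁ := h1.differentiable one_ne_zero
  push_cast
  rw [forall_congr' fun z => wd_fst_iff_wd_cexp_mul (ha z) (hφ₁ z),
    forall_congr' fun z => wd_snd_iff_wd_const_mul hlam,
    forall_congr' fun z => wdb_fst_iff_wdb_cexp_mul hlam (ha z) (hφ₁ z),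
    forall_congr' fun z => wdb_snd_iff_wdb_const_mul (a := fun w => ((α w : ℝ) : ℂ)) hlam]
  tauto

/-- Gauge equivalence between the sinh-Gordon zero-curvature linear problem
(with u = 2α and spectral parameter λ ≠ 0) and the Gauss–Weingarten system of a
CMC surface, under ψ₁ = λφ₂, ψ₂ = e^α φ₁ (Proposition 6 of the paper). -/
theorem stmt10 (α : ℂ → ℝ) (hα : ContDiff ℝ 1 α) (lam : ℂ) (hlam : lam ≠ 0)
    (φ₁ φ₂ : ℂ → ℂ) (h1 : ContDiff ℝ 1 φ₁) (h2 : ContDiff ℝ 1 φ₂) :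
    ((∀ z, wd φ₁ z = (1 / 2) *
        (-(wd (fun w => ((2 * α w : ℝ) : ℂ)) z) * φ₁ z - lam * φ₂ z)) ∧
     (∀ z, wd φ₂ z = (1 / 2) *
        (-lam * φ₁ z + wd (fun w => ((2 * α w : ℝ) : ℂ)) z * φ₂ z)) ∧
     (∀ z, wdb φ₁ z = (1 / (2 * lam)) * Complex.exp (-((2 * α z : ℝ) : ℂ)) * φ₂ z) ∧
     (∀ z, wdb φ₂ z = (1 / (2 * lam)) * Complex.exp ((2 * α z : ℝ) : ℂ) * φ₁ z))
    ↔
    ((∀ z, wd (fun w => lam * φ₂ w) z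
        = wd (fun w => ((α w : ℝ) : ℂ)) z * (lam * φ₂ z)
          - (lam ^ 2 / 2) * Complex.exp (-((α z : ℝ) : ℂ)) *
            (Complex.exp ((α z : ℝ) : ℂ) * φ₁ z)) ∧
     (∀ z, wd (fun w => Complex.exp ((α w : ℝ) : ℂ) * φ₁ w) z
        = -(1 / 2) * Complex.exp ((α z : ℝ) : ℂ) * (lam * φ₂ z)) ∧
     (∀ z, wdb (fun w => lam * φ₂ w) z
        = (1 / 2) * Complex.exp ((α z : ℝ) : ℂ) * (Complex.exp ((α z : ℝ) : ℂ) * φ₁ z)) ∧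
     (∀ z, wdb (fun w => Complex.exp ((α w : ℝ) : ℂ) * φ₁ w) z
        = (1 / (2 * lam ^ 2)) * Complex.exp (-((α z : ℝ) : ℂ)) * (lam * φ₂ z)
          + wdb (fun w => ((α w : ℝ) : ℂ)) z * (Complex.exp ((α z : ℝ) : ℂ) * φ₁ z))) :=
  stmt10_general α hα lam hlam φ₁ φ₂ h1
end

section
/- Let α, k₁, k₂ : ℂ → ℝ be continuously real-differentiable, let λ ∈ ℂ, and set p = (k₁ + k₂)·e^{α}/4 and q = (k₁ − k₂)·e^{α}/4. Suppose φ = (φ₁, φ₂, φ₃, φ₄) : ℂ → ℂ⁴ is continuously real-differentiable and satisfies the system: ∂φ₁ = ∂α·φ₁ + q·φ₂; ∂φ₂ = −p·φ₁ + λ·φ₃; ∂φ₃ = λ·φ₂ + 2∂α·φ₃ + q·φ₄; ∂φ₄ = −p·φ₃ + ∂α·φ₄; ∂̄φ₁ = p·φ₂ + λ·φ₄; ∂̄φ₂ = −q·φ₁ + ∂̄α·φ₂; ∂̄φ₃ = ∂̄α·φ₃ + p·φ₄; ∂̄φ₄ = λ·φ₁ − q·φ₃ + 2∂̄α·φ₄.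 Then: (1) ψ = (e^{−α}·φ₃, e^{−α}·φ₄) satisfies the Dirac equation with potential U = (k₁ + k₂)·e^{α}/4, i.e. ∂(e^{−α}φ₄) + U·e^{−α}φ₃ = 0 and −∂̄(e^{−α}φ₃) + U·e^{−α}φ₄ = 0; and (2) ψ* = (e^{−α}·φ₂, e^{−α}·φ₁) satisfies the Dirac equation with potential U* = (k₂ − k₁)·e^{α}/4, i.e. ∂(e^{−α}φ₁) + U*·e^{−α}φ₂ = 0 and −∂̄(e^{−α}φ₂) + U*·e^{−α}φ₁ = 0. -/
/-!
Multiplying by the gauge factor `e^{-α}` turns `∂` into `∂ - ∂α` and `∂̄` into `∂̄ - ∂̄α`.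
Hence the equations of the linear problem for `∂φ₄`, `∂̄φ₃`, `∂φ₁`, `∂̄φ₂` lose their `α`-terms
after rescaling, and what remains is exactly the pair of Dirac equations with potentials
`p` and `-q`.
-/

open Complex

section Gauge

variable {A f : ℂ → ℂ} {z : ℂ}

theorem fderiv_exp_neg_mul_apply (hA : DifferentiableAt ℝ A z) (hf : DifferentiableAt ℝ f z)
    (v : ℂ) :
    fderiv ℝ (fun w => exp (-A w) * f w) z v
      = exp (-A z) * (fderiv ℝ f z v - fderiv ℝ A z v * f z) := by
  rw [(hA.hasFDerivAt.fun_neg.cexp.fun_mul hf.hasFDerivAt).fderiv]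
  simp only [add_apply, smul_apply, neg_apply, smul_eq_mul]
  ring

theorem wd_exp_neg_mul (hA : DifferentiableAt ℝ A z) (hf : DifferentiableAt ℝ f z) :
    wd (fun w => exp (-A w) * f w) z = exp (-A z) * (wd f z - wd A z * f z) := by
  simp only [wd, fderiv_exp_neg_mul_apply hA hf]
  ring

theorem wdb_exp_neg_mul (hA : DifferentiableAt ℝ A z) (hf : DifferentiableAt ℝ f z) :
    wdb (fun w => exp (-A w) * f w) z = exp (-A z) * (wdb f z - wdb A z * f z) := by
  simp only [wdb, fderiv_exp_neg_mul_apply hA hf]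
  ring

end Gauge

theorem stmt13_general (α : ℂ → ℝ)
    (hα : ContDiff ℝ 1 α)
    (φ₁ φ₂ φ₃ φ₄ : ℂ → ℂ)
    (h1 : ContDiff ℝ 1 φ₁) (h2 : ContDiff ℝ 1 φ₂)
    (h3 : ContDiff ℝ 1 φ₃) (h4 : ContDiff ℝ 1 φ₄)
    (p q : ℂ → ℂ)
    (e1 : ∀ z, wd φ₁ z = wd (fun w => ((α w : ℝ) : ℂ)) z * φ₁ z + q z * φ₂ z)
    (e4 : ∀ z, wd φ₄ z = -(p z) * φ₃ z + wd (fun w => ((α w : ℝ) : ℂ)) z * φ₄ z)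
    (e6 : ∀ z, wdb φ₂ z = -(q z) * φ₁ z + wdb (fun w => ((α w : ℝ) : ℂ)) z * φ₂ z)
    (e7 : ∀ z, wdb φ₃ z = wdb (fun w => ((α w : ℝ) : ℂ)) z * φ₃ z + p z * φ₄ z) :
    ((∀ z, wd (fun w => Complex.exp (-((α w : ℝ) : ℂ)) * φ₄ w) z
        + p z * (Complex.exp (-((α z : ℝ) : ℂ)) * φ₃ z) = 0) ∧
     (∀ z, -wdb (fun w => Complex.exp (-((α w : ℝ) : ℂ)) * φ₃ w) z
        + p z * (Complex.exp (-((α z : ℝ) : ℂ)) * φ₄ z) = 0)) ∧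
    ((∀ z, wd (fun w => Complex.exp (-((α w : ℝ) : ℂ)) * φ₁ w) z
        + (-(q z)) * (Complex.exp (-((α z : ℝ) : ℂ)) * φ₂ z) = 0) ∧
     (∀ z, -wdb (fun w => Complex.exp (-((α w : ℝ) : ℂ)) * φ₂ w) z
        + (-(q z)) * (Complex.exp (-((α z : ℝ) : ℂ)) * φ₁ z) = 0)) := by
  have hA : Differentiable ℝ (fun w => ((α w : ℝ) : ℂ)) :=
    ofRealCLM.differentiable.comp (hα.differentiable one_ne_zero)
  have hφ {φ : ℂ → ℂ} (h : ContDiff ℝ 1 φ) (z : ℂ) : DifferentiableAt ℝ φ z :=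
    h.differentiable one_ne_zero z
  refine ⟨⟨fun z => ?_, fun z => ?_⟩, fun z => ?_, fun z => ?_⟩
  · rw [wd_exp_neg_mul (hA z) (hφ h4 z), e4]; ring
  · rw [wdb_exp_neg_mul (hA z) (hφ h3 z), e7]; ring
  · rw [wd_exp_neg_mul (hA z) (hφ h1 z), e1]; ring
  · rw [wdb_exp_neg_mul (hA z) (hφ h2 z), e6]; ring

/-- Proposition 7 of the paper: a Floquet solution φ of the 4×4 isothermic
linear problem with spectral parameter λ projects onto solutions of the Dirac
equations with the potentials U = (k₁ + k₂)e^α/4 of the surface and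
U* = (k₂ − k₁)e^α/4 of its dual. -/
theorem stmt13 (α k₁ k₂ : ℂ → ℝ)
    (hα : ContDiff ℝ 1 α) (hk₁ : ContDiff ℝ 1 k₁) (hk₂ : ContDiff ℝ 1 k₂)
    (lam : ℂ) (φ₁ φ₂ φ₃ φ₄ : ℂ → ℂ)
    (h1 : ContDiff ℝ 1 φ₁) (h2 : ContDiff ℝ 1 φ₂)
    (h3 : ContDiff ℝ 1 φ₃) (h4 : ContDiff ℝ 1 φ₄)
    (p q : ℂ → ℂ)
    (hp : ∀ z, p z = ((k₁ z + k₂ z : ℝ) : ℂ) * Complex.exp ((α z : ℝ) : ℂ) / 4)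
    (hq : ∀ z, q z = ((k₁ z - k₂ z : ℝ) : ℂ) * Complex.exp ((α z : ℝ) : ℂ) / 4)
    (e1 : ∀ z, wd φ₁ z = wd (fun w => ((α w : ℝ) : ℂ)) z * φ₁ z + q z * φ₂ z)
    (e2 : ∀ z, wd φ₂ z = -(p z) * φ₁ z + lam * φ₃ z)
    (e3 : ∀ z, wd φ₃ z = lam * φ₂ z
      + 2 * wd (fun w => ((α w : ℝ) : ℂ)) z * φ₃ z + q z * φ₄ z)
    (e4 : ∀ z, wd φ₄ z = -(p z) * φ₃ z + wd (fun w => ((α w : ℝ) : ℂ)) z * φ₄ z)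
    (e5 : ∀ z, wdb φ₁ z = p z * φ₂ z + lam * φ₄ z)
    (e6 : ∀ z, wdb φ₂ z = -(q z) * φ₁ z + wdb (fun w => ((α w : ℝ) : ℂ)) z * φ₂ z)
    (e7 : ∀ z, wdb φ₃ z = wdb (fun w => ((α w : ℝ) : ℂ)) z * φ₃ z + p z * φ₄ z)
    (e8 : ∀ z, wdb φ₄ z = lam * φ₁ z - q z * φ₃ z
      + 2 * wdb (fun w => ((α w : ℝ) : ℂ)) z * φ₄ z) :
    ((∀ z, wd (fun w => Complex.exp (-((α w : ℝ) : ℂ)) * φ₄ w) z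
        + p z * (Complex.exp (-((α z : ℝ) : ℂ)) * φ₃ z) = 0) ∧
     (∀ z, -wdb (fun w => Complex.exp (-((α w : ℝ) : ℂ)) * φ₃ w) z
        + p z * (Complex.exp (-((α z : ℝ) : ℂ)) * φ₄ z) = 0)) ∧
    ((∀ z, wd (fun w => Complex.exp (-((α w : ℝ) : ℂ)) * φ₁ w) z
        + (-(q z)) * (Complex.exp (-((α z : ℝ) : ℂ)) * φ₂ z) = 0) ∧
     (∀ z, -wdb (fun w => Complex.exp (-((α w : ℝ) : ℂ)) * φ₂ w) z
        + (-(q z)) * (Complex.exp (-((α z : ℝ) : ℂ)) * φ₁ z) = 0)) :=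
  stmt13_general α hα φ₁ φ₂ φ₃ φ₄ h1 h2 h3 h4 p q e1 e4 e6 e7
end

section
/- Let λ ∈ ℂ with λ ≠ 0, and define ψ = (ψ₁, ψ₂) : ℂ → ℂ² by ψ₁(z) = exp(λz − (1/(8λ))·conj(z)) and ψ₂(z) = (i/(2√2·λ))·exp(λz − (1/(8λ))·conj(z)). Then ψ satisfies the Dirac equation ∂ψ₂ + V·ψ₁ = 0 and −∂̄ψ₁ + conj(V)·ψ₂ = 0 with constant potential V = −i/(2√2), and its Floquet multipliers with respect to the lattice 2πℤ + 2πiℤ are ψ(z + 2π) = exp(2π(λ − 1/(8λ)))·ψ(z) and ψ(z + 2πi) = exp(2πi(λ + 1/(8λ)))·ψ(z) for all z ∈ ℂ. -/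
/-!
`ψ` is a constant multiple of `e^{L(z)}` with `L(z) = λz − c z̄`, `c = 1/(8λ)`, an `ℝ`-linear map.
Hence `∂ψ = λψ` and `∂̄ψ = −cψ`, and the Dirac equation reduces to the two scalar identities
`(i/(2√2 λ))·λ = i/(2√2)` and `V̄ · i/(2√2 λ) = −1/(8λ)`. Additivity of `L` gives
`ψ(z + ω) = e^{L(ω)} ψ(z)`, with `L(2π) = 2π(λ − c)` and `L(2πi) = 2πi(λ + c)`.
-/

open Complex

open ComplexConjugate

/-- Every `ℝ`-linear endomorphism of `ℂ` is `v ↦ a v + b v̄`, with `∂ = a` and `∂̄ = b`. -/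
noncomputable def wirtingerCLM (a b : ℂ) : ℂ →L[ℝ] ℂ :=
  a • ContinuousLinearMap.id ℝ ℂ + b • conjCLE.toContinuousLinearMap

@[simp]
lemma wirtingerCLM_apply (a b v : ℂ) : wirtingerCLM a b v = a * v + b * conj v := by
  simp [wirtingerCLM]

lemma HasFDerivAt.wd_eq {f : ℂ → ℂ} {z a b : ℂ} (hf : HasFDerivAt f (wirtingerCLM a b) z) :
    wd f z = a := by
  rw [wd, hf.fderiv]
  simp only [wirtingerCLM_apply, map_one, conj_I]
  ring_nf
  rw [I_sq]
  ring

lemma HasFDerivAt.wdb_eq {f : ℂ → ℂ} {z a b : ℂ} (hf : HasFDerivAt f (wirtingerCLM a b) z) :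
    wdb f z = b := by
  rw [wdb, hf.fderiv]
  simp only [wirtingerCLM_apply, map_one, conj_I]
  ring_nf
  rw [I_sq]
  ring

lemma hasFDerivAt_mul_sub_mul_conj (lam c z : ℂ) :
    HasFDerivAt (fun w => lam * w - c * conj w) (wirtingerCLM lam (-c)) z := by
  convert (wirtingerCLM lam (-c)).hasFDerivAt using 1
  ext w
  simp [sub_eq_add_neg]

lemma hasFDerivAt_const_mul_exp_mul_sub_mul_conj (k lam c z : ℂ) :
    HasFDerivAt (fun w => k * exp (lam * w - c * conj w))
      (wirtingerCLM (k * lam * exp (lam * z - c * conj z))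
        (-(k * c) * exp (lam * z - c * conj z))) z := by
  refine ((((hasDerivAt_exp _).hasFDerivAt.restrictScalars ℝ).comp z
    (hasFDerivAt_mul_sub_mul_conj lam c z)).const_mul k).congr_fderiv
      (ContinuousLinearMap.ext fun v => ?_)
  simp only [smul_apply, ContinuousLinearMap.comp_apply, wirtingerCLM_apply,
    ContinuousLinearMap.coe_restrictScalars', ContinuousLinearMap.toSpanSingleton_apply,
    smul_eq_mul]
  ring

lemma exp_mul_sub_mul_conj_add (lam c z ω : ℂ) :
    exp (lam * (z + ω) - c * conj (z + ω)) =
      exp (lam * ω - c * conj ω) * exp (lam * z - c * conj z) := by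
  rw [← exp_add, map_add]
  congr 1
  ring

lemma exp_mul_sub_mul_conj_add_two_pi (lam c z : ℂ) :
    exp (lam * (z + 2 * Real.pi) - c * conj (z + 2 * Real.pi)) =
      exp (2 * Real.pi * (lam - c)) * exp (lam * z - c * conj z) := by
  rw [exp_mul_sub_mul_conj_add]
  congr 2
  simp only [map_mul, map_ofNat, conj_ofReal]
  ring

lemma exp_mul_sub_mul_conj_add_two_pi_mul_I (lam c z : ℂ) :
    exp (lam * (z + 2 * Real.pi * I) - c * conj (z + 2 * Real.pi * I)) =
      exp (2 * Real.pi * I * (lam + c)) * exp (lam * z - c * conj z) := by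
  rw [exp_mul_sub_mul_conj_add]
  congr 2
  simp only [map_mul, map_ofNat, conj_ofReal, conj_I]
  ring

lemma two_mul_sqrt_two_sq : (2 * (Real.sqrt 2 : ℂ)) ^ 2 = 8 := by
  rw [mul_pow, ← ofReal_pow, Real.sq_sqrt zero_le_two]
  norm_num

lemma I_div_two_mul_sqrt_two_mul_mul_cancel {lam : ℂ} (hlam : lam ≠ 0) :
    I / (2 * Real.sqrt 2 * lam) * lam = I / (2 * Real.sqrt 2) := by
  rw [div_mul_eq_div_div, div_mul_cancel₀ _ hlam]

lemma conj_neg_I_div_two_mul_sqrt_two_mul (lam : ℂ) :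
    conj (-I / (2 * Real.sqrt 2)) * (I / (2 * Real.sqrt 2 * lam)) = -(1 / (8 * lam)) := by
  simp only [neg_div, map_neg, map_div₀, conj_I, map_mul, map_ofNat, conj_ofReal, neg_neg]
  rw [div_mul_div_comm, I_mul_I, ← two_mul_sqrt_two_sq]
  ring

/-- The Floquet functions of the Clifford torus: for λ ≠ 0,
ψ₁(z) = e^{λz − z̄/(8λ)}, ψ₂(z) = (i/(2√2 λ))e^{λz − z̄/(8λ)} solve the Dirac
equation ∂ψ₂ + Vψ₁ = 0, −∂̄ψ₁ + V̄ψ₂ = 0 with V = −i/(2√2), and their Floquet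
multipliers for the lattice 2πℤ + 2πiℤ are e^{2π(λ − 1/(8λ))} and
e^{2πi(λ + 1/(8λ))}. -/
theorem stmt19 (lam : ℂ) (hlam : lam ≠ 0) :
    let V : ℂ := -Complex.I / (2 * (Real.sqrt 2 : ℂ))
    let ψ₁ : ℂ → ℂ := fun z =>
      Complex.exp (lam * z - 1 / (8 * lam) * (starRingEnd ℂ) z)
    let ψ₂ : ℂ → ℂ := fun z =>
      Complex.I / (2 * (Real.sqrt 2 : ℂ) * lam) *
        Complex.exp (lam * z - 1 / (8 * lam) * (starRingEnd ℂ) z)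
    (∀ z, wd ψ₂ z + V * ψ₁ z = 0) ∧
    (∀ z, -wdb ψ₁ z + (starRingEnd ℂ) V * ψ₂ z = 0) ∧
    (∀ z, ψ₁ (z + 2 * Real.pi) =
      Complex.exp (2 * Real.pi * (lam - 1 / (8 * lam))) * ψ₁ z) ∧
    (∀ z, ψ₂ (z + 2 * Real.pi) =
      Complex.exp (2 * Real.pi * (lam - 1 / (8 * lam))) * ψ₂ z) ∧
    (∀ z, ψ₁ (z + 2 * Real.pi * Complex.I) =
      Complex.exp (2 * Real.pi * Complex.I * (lam + 1 / (8 * lam))) * ψ₁ z) ∧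
    (∀ z, ψ₂ (z + 2 * Real.pi * Complex.I) =
      Complex.exp (2 * Real.pi * Complex.I * (lam + 1 / (8 * lam))) * ψ₂ z) := by
  intro V ψ₁ ψ₂
  refine ⟨fun z => ?_, fun z => ?_, fun z => ?_, fun z => ?_, fun z => ?_, fun z => ?_⟩
  · rw [(hasFDerivAt_const_mul_exp_mul_sub_mul_conj _ lam _ z).wd_eq]
    linear_combination exp (lam * z - 1 / (8 * lam) * conj z) *
      I_div_two_mul_sqrt_two_mul_mul_cancel hlam
  · have hwdb := (hasFDerivAt_const_mul_exp_mul_sub_mul_conj 1 lam (1 / (8 * lam)) z).wdb_eq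
    simp only [one_mul] at hwdb
    rw [hwdb]
    linear_combination exp (lam * z - 1 / (8 * lam) * conj z) *
      conj_neg_I_div_two_mul_sqrt_two_mul lam
  · exact exp_mul_sub_mul_conj_add_two_pi lam _ z
  · dsimp only [ψ₂]
    rw [exp_mul_sub_mul_conj_add_two_pi, mul_left_comm]
  · exact exp_mul_sub_mul_conj_add_two_pi_mul_I lam _ z
  · dsimp only [ψ₂]
    rw [exp_mul_sub_mul_conj_add_two_pi_mul_I, mul_left_comm]
end
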